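/- arXiv:1207.4841 — 5 statements merged into one kernel-verified Lean document; each statement's English description precedes it below -/
import Mathlib

section
/- For every a ∈ {0, 1, 2} and every integer k ≥ 0 with a + k ≥ 1, one has ‖2^a · 3^k‖ = 2a + 3k. -/
open Real

/-- `Writes n k` means the positive integer `n` can be written using exactly `k` ones
combined by additions and multiplications. -/
inductive Writes : ℕ → ℕ → Prop
  | one : Writes 1 1
  | add {a b m n : ℕ} : Writes a m → Writes b n → Writes (a + b) (m + n)
  | mul {a b m n : ℕ} : Writes a m → Writes b n → Writes (a * b) (m + n)

/-- The integer complexity `‖n‖`: the least number of 1's needed to write `n`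
using additions and multiplications. -/
noncomputable def cpx (n : ℕ) : ℕ := sInf {k | Writes n k}

/-- The defect `δ(n) = ‖n‖ - 3 log₃ n`. -/
noncomputable def defect (n : ℕ) : ℝ := (cpx n : ℝ) - 3 * Real.logb 3 n

/-!
The upper bound comes from the expression `(1+1)^a * (1+1+1)^k`. For the lower bound, let
`E m` (`maxWritable m`) be the largest integer that can be written with `m ≥ 1` ones:
`E m = 3^j, 4·3^(j-1), 2·3^j` for `m = 3j, 3j+1, 3j+2`. One has `E p + E q ≤ E (p+q)` and
`E p * E q ≤ E (p+q)`, so every integer written with `m` ones is at most `E m`, and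
`E (2a + 3k - 1) < 2^a 3^k` when `a ≤ 2`.
-/

def maxWritable : ℕ → ℕ
  | 0 => 0
  | 1 => 1
  | 2 => 2
  | 3 => 3
  | 4 => 4
  | n + 5 => 3 * maxWritable (n + 2)

theorem maxWritable_add_three {n : ℕ} (hn : 2 ≤ n) : maxWritable (n + 3) = 3 * maxWritable n := by
  obtain ⟨n, rfl⟩ := Nat.exists_eq_add_of_le' hn
  rfl

theorem maxWritable_three_mul_add (k : ℕ) {r : ℕ} (hr : 2 ≤ r) :
    maxWritable (3 * k + r) = 3 ^ k * maxWritable r := by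
  induction k with
  | zero => simp
  | succ k ih =>
    rw [show 3 * (k + 1) + r = 3 * k + r + 3 by ring, maxWritable_add_three (by omega), ih, pow_succ]
    ring

theorem maxWritable_op_le {op : ℕ → ℕ → ℕ} (op_comm : ∀ x y, op x y = op y x)
    (op_three_mul_le : ∀ x y, op (3 * x) y ≤ 3 * op x y)
    (base : ∀ p < 5, ∀ q < 5, op (maxWritable p) (maxWritable q) ≤ maxWritable (p + q))
    (p q : ℕ) : op (maxWritable p) (maxWritable q) ≤ maxWritable (p + q) := by
  induction h : p + q using Nat.strong_induction_on generalizing p q with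
  | _ n ih =>
  subst h
  have reduce : ∀ p' q', p' + q' = p + q → 5 ≤ p' →
      op (maxWritable p') (maxWritable q') ≤ maxWritable (p' + q') := by
    intro p' q' hpq hp'
    obtain ⟨r, rfl⟩ := Nat.exists_eq_add_of_le' hp'
    calc op (maxWritable (r + 2 + 3)) (maxWritable q')
        = op (3 * maxWritable (r + 2)) (maxWritable q') := by rw [maxWritable_add_three (by omega)]
      _ ≤ 3 * op (maxWritable (r + 2)) (maxWritable q') := op_three_mul_le _ _
      _ ≤ 3 * maxWritable (r + 2 + q') := by gcongr; exact ih _ (by omega) _ _ rfl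
      _ = maxWritable (r + 2 + 3 + q') := by
        rw [show r + 2 + 3 + q' = r + 2 + q' + 3 by ring, maxWritable_add_three (by omega)]
  rcases Nat.lt_or_ge p 5 with hp | hp
  · rcases Nat.lt_or_ge q 5 with hq | hq
    · exact base p hp q hq
    · rw [op_comm, add_comm]
      exact reduce q p (add_comm q p) hq
  · exact reduce p q rfl hp

theorem maxWritable_add_le (p q : ℕ) : maxWritable p + maxWritable q ≤ maxWritable (p + q) :=
  maxWritable_op_le add_comm (fun _ _ => by omega) (by decide) p q

theorem maxWritable_mul_le (p q : ℕ) : maxWritable p * maxWritable q ≤ maxWritable (p + q) :=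
  maxWritable_op_le mul_comm (fun _ _ => (mul_assoc _ _ _).le) (by decide) p q

theorem maxWritable_mono : Monotone maxWritable :=
  monotone_nat_of_le_succ fun n => (Nat.le_add_right _ _).trans (maxWritable_add_le n 1)

theorem Writes.le_maxWritable {n m : ℕ} (h : Writes n m) : n ≤ maxWritable m := by
  induction h with
  | one => rfl
  | add _ _ ha hb => exact (Nat.add_le_add ha hb).trans (maxWritable_add_le _ _)
  | mul _ _ ha hb => exact (Nat.mul_le_mul ha hb).trans (maxWritable_mul_le _ _)

theorem Writes.pow {n m : ℕ} (h : Writes n m) {k : ℕ} (hk : 1 ≤ k) : Writes (n ^ k) (m * k) := by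
  induction k, hk using Nat.le_induction with
  | base => simpa using h
  | succ k _ ih => simpa [pow_succ, mul_add] using ih.mul h

theorem writes_two : Writes 2 2 := Writes.one.add Writes.one

theorem writes_three : Writes 3 3 := writes_two.add Writes.one

theorem writes_two_pow_mul_three_pow {a k : ℕ} (hak : 1 ≤ a + k) :
    Writes (2 ^ a * 3 ^ k) (2 * a + 3 * k) := by
  rcases Nat.eq_zero_or_pos a with rfl | ha
  · simpa [mul_comm] using writes_three.pow (k := k) (by omega)
  rcases Nat.eq_zero_or_pos k with rfl | hk
  · simpa [mul_comm] using writes_two.pow ha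
  · simpa [mul_comm] using (writes_two.pow ha).mul (writes_three.pow hk)

theorem maxWritable_lt_two_pow_mul_three_pow {a k : ℕ} (ha : a ≤ 2) (hak : 1 ≤ a + k) :
    maxWritable (2 * a + 3 * k - 1) < 2 ^ a * 3 ^ k := by
  interval_cases a
  · obtain ⟨k, rfl⟩ : ∃ j, k = j + 1 := ⟨k - 1, by omega⟩
    rw [show 2 * 0 + 3 * (k + 1) - 1 = 3 * k + 2 by omega, maxWritable_three_mul_add k le_rfl]
    simp only [maxWritable, pow_succ]
    have : 0 < 3 ^ k := by positivity
    omega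
  · rcases Nat.eq_zero_or_pos k with rfl | hk
    · decide
    obtain ⟨k, rfl⟩ : ∃ j, k = j + 1 := ⟨k - 1, by omega⟩
    rw [show 2 * 1 + 3 * (k + 1) - 1 = 3 * k + 4 by omega, maxWritable_three_mul_add k (by norm_num)]
    simp only [maxWritable, pow_succ]
    have : 0 < 3 ^ k := by positivity
    omega
  · rw [show 2 * 2 + 3 * k - 1 = 3 * k + 3 by omega, maxWritable_three_mul_add k (by norm_num)]
    simp only [maxWritable]
    have : 0 < 3 ^ k := by positivity
    omega

theorem le_of_writes_two_pow_mul_three_pow {a k m : ℕ} (ha : a ≤ 2) (hak : 1 ≤ a + k)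
    (h : Writes (2 ^ a * 3 ^ k) m) : 2 * a + 3 * k ≤ m := by
  by_contra! hm
  have hle : 2 ^ a * 3 ^ k ≤ maxWritable (2 * a + 3 * k - 1) :=
    h.le_maxWritable.trans (maxWritable_mono (Nat.le_sub_one_of_lt hm))
  exact hle.not_gt (maxWritable_lt_two_pow_mul_three_pow ha hak)

theorem cpx_eq_of_writes {n k : ℕ} (h : Writes n k) (hmin : ∀ m, Writes n m → k ≤ m) :
    cpx n = k :=
  le_antisymm (Nat.sInf_le h) (le_csInf ⟨k, h⟩ hmin)

/-- For a ∈ {0,1,2} and k ≥ 0 with a + k ≥ 1, ‖2^a·3^k‖ = 2a + 3k. -/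
theorem complexity_two_pow_small_three_pow (a k : ℕ) (ha : a ≤ 2) (hak : 1 ≤ a + k) :
    cpx (2 ^ a * 3 ^ k) = 2 * a + 3 * k :=
  cpx_eq_of_writes (writes_two_pow_mul_three_pow hak)
    fun _ => le_of_writes_two_pow_mul_three_pow ha hak
end

section
/- For every positive integer n, the defect satisfies δ(n) ≥ 0; moreover δ(n) = 0 if and only if n = 3^k for some integer k ≥ 1. -/
/-!
An expression for `n` with `k` ones satisfies `n ^ 3 ≤ 3 ^ k`. Products multiply the bounds; for
a sum `a + b` with `2 ≤ a ≤ b` one has `a + b ≤ a * b`, and adding a single one is absorbed by the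
factor `3` it contributes, since `(1 + b) ^ 3 ≤ 3 * b ^ 3` for `b ≥ 3` (smaller `b` by hand).
Thus `δ(n) = log₃ (3 ^ ‖n‖ / n ^ 3) ≥ 0`, with equality iff `n ^ 3 = 3 ^ ‖n‖`, which forces `n` to
be a power of `3`, and `3 ^ k` does attain `3k` as a product of `k` threes.
-/

open Real

theorem one_add_cube_le_three_pow_succ {b k : ℕ} (hk : 1 ≤ k) (hb : b ^ 3 ≤ 3 ^ k) :
    (1 + b) ^ 3 ≤ 3 ^ (k + 1) := by
  rcases Nat.lt_or_ge b 3 with hb3 | hb3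
  · obtain rfl | hk2 := hk.eq_or_lt
    · interval_cases b <;> simp_all
    · calc (1 + b) ^ 3 ≤ 3 ^ 3 := by gcongr; omega
        _ ≤ 3 ^ (k + 1) := Nat.pow_le_pow_right (by norm_num) (by omega)
  · calc (1 + b) ^ 3 ≤ 3 * b ^ 3 := by nlinarith [Nat.mul_le_mul hb3 hb3]
      _ ≤ 3 * 3 ^ k := Nat.mul_le_mul_left 3 hb
      _ = 3 ^ (k + 1) := (pow_succ' 3 k).symm

theorem add_cube_le_three_pow {a b m k : ℕ} (hab : a ≤ b) (hm : 1 ≤ m) (hk : 1 ≤ k)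
    (ha : a ^ 3 ≤ 3 ^ m) (hb : b ^ 3 ≤ 3 ^ k) : (a + b) ^ 3 ≤ 3 ^ (m + k) := by
  rcases Nat.lt_or_ge a 2 with ha2 | ha2
  · interval_cases a
    · calc (0 + b) ^ 3 ≤ 3 ^ k := by simpa using hb
        _ ≤ 3 ^ (m + k) := Nat.pow_le_pow_right (by norm_num) (by omega)
    · calc (1 + b) ^ 3 ≤ 3 ^ (k + 1) := one_add_cube_le_three_pow_succ hk hb
        _ ≤ 3 ^ (m + k) := Nat.pow_le_pow_right (by norm_num) (by omega)
  · calc (a + b) ^ 3 ≤ (a * b) ^ 3 := by gcongr; nlinarith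
      _ = a ^ 3 * b ^ 3 := mul_pow a b 3
      _ ≤ 3 ^ (m + k) := by rw [pow_add]; exact Nat.mul_le_mul ha hb

namespace Writes

theorem ones_pos {n k : ℕ} (h : Writes n k) : 0 < k := by
  induction h <;> omega

theorem cube_le_three_pow {n k : ℕ} (h : Writes n k) : n ^ 3 ≤ 3 ^ k := by
  induction h with
  | one => norm_num
  | @add a b m k ha hb iha ihb =>
    rcases le_total a b with hab | hba
    · exact add_cube_le_three_pow hab ha.ones_pos hb.ones_pos iha ihb
    · rw [add_comm a, add_comm m]
      exact add_cube_le_three_pow hba hb.ones_pos ha.ones_pos ihb iha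
  | mul _ _ iha ihb =>
    rw [mul_pow, pow_add]
    exact Nat.mul_le_mul iha ihb

theorem self {n : ℕ} (hn : 0 < n) : Writes n n :=
  Nat.le_induction one (fun _ _ ih => ih.add one) n hn

theorem three_pow {j : ℕ} (hj : 1 ≤ j) : Writes (3 ^ j) (3 * j) := by
  induction j, hj using Nat.le_induction with
  | base => exact self three_pos
  | succ j _ ih => simpa [pow_succ, mul_add] using ih.mul (self three_pos)

end Writes

theorem writes_cpx {n : ℕ} (hn : 0 < n) : Writes n (cpx n) :=
  Nat.sInf_mem ⟨n, Writes.self hn⟩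

theorem cpx_le {n k : ℕ} (h : Writes n k) : cpx n ≤ k :=
  Nat.sInf_le h

theorem cube_le_three_pow_cpx {n : ℕ} (hn : 0 < n) : n ^ 3 ≤ 3 ^ cpx n :=
  (writes_cpx hn).cube_le_three_pow

theorem cube_eq_three_pow_cpx_iff {n : ℕ} (hn : 0 < n) :
    n ^ 3 = 3 ^ cpx n ↔ ∃ k, 1 ≤ k ∧ n = 3 ^ k := by
  constructor
  · intro h
    have hdvd : n ∣ 3 ^ cpx n := h ▸ dvd_pow_self n three_ne_zero
    obtain ⟨k, -, rfl⟩ := (Nat.dvd_prime_pow Nat.prime_three).1 hdvd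
    refine ⟨k, Nat.one_le_iff_ne_zero.2 ?_, rfl⟩
    rintro rfl
    have h1 : cpx 1 = 0 := by simpa using h.symm
    exact (writes_cpx hn).ones_pos.ne' h1
  · rintro ⟨k, hk, rfl⟩
    refine le_antisymm (cube_le_three_pow_cpx hn) ?_
    rw [← pow_mul, mul_comm]
    exact Nat.pow_le_pow_right three_pos (cpx_le (Writes.three_pow hk))

theorem defect_eq_logb_sub (n : ℕ) :
    defect n = logb 3 ((3 ^ cpx n : ℕ) : ℝ) - logb 3 ((n ^ 3 : ℕ) : ℝ) := by
  push_cast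
  rw [defect, logb_pow, logb_pow, logb_self_eq_one (by norm_num)]
  ring

theorem defect_nonneg {n : ℕ} (hn : 0 < n) : 0 ≤ defect n := by
  rw [defect_eq_logb_sub, sub_nonneg]
  exact logb_le_logb_of_le (by norm_num) (by positivity)
    (by exact_mod_cast cube_le_three_pow_cpx hn)

theorem defect_eq_zero_iff {n : ℕ} (hn : 0 < n) : defect n = 0 ↔ n ^ 3 = 3 ^ cpx n := by
  rw [defect_eq_logb_sub, sub_eq_zero, eq_comm, (logb_injOn_pos (by norm_num)).eq_iff
    (Set.mem_Ioi.2 (by positivity)) (Set.mem_Ioi.2 (by positivity)), Nat.cast_inj]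

/-- δ(n) ≥ 0 for all n ≥ 1, with δ(n) = 0 iff n = 3^k for some k ≥ 1. -/
theorem defect_nonneg_and_eq_zero_iff (n : ℕ) (hn : 0 < n) :
    0 ≤ defect n ∧ (defect n = 0 ↔ ∃ k : ℕ, 1 ≤ k ∧ n = 3 ^ k) :=
  ⟨defect_nonneg hn, (defect_eq_zero_iff hn).trans (cube_eq_three_pow_cpx_iff hn)⟩
end

section
/- Let x₁, x₂, …, x_r > 0 be real numbers with Σ_{i=1}^r x_i < k + 1, where k ≥ 1 is a natural number. (1) If k ≥ 2, then either there is some i with x_i ≥ k, or there is a partition of {1, …, r} into two sets A and B with Σ_{i∈A} x_i < k and Σ_{i∈B} x_i < k. (2) If k = 1, then either there is some i with x_i ≥ 1, or there is a partition of {1, …, r} into three sets A, B, C with Σ_{i∈A} x_i < 1, Σ_{i∈B} x_i < 1, and Σ_{i∈C} x_i < 1. -/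
/-!
Once no single `x i` reaches `k`, cut the sequence at the first index `i` at which the running sum
exceeds `∑ x - k`. The part before `i` has sum at most `∑ x - k < 1`, the part after `i` has sum
below `k`, and `x i < k`; these three blocks already settle `k = 1`. For `k ≥ 2` either the
blocks before and at `i` together stay below `k`, or the blocks before and after `i` each have sum
below `1`, and then their union stays below `2 ≤ k`.
-/

open Finset

variable {ι : Type*} [Fintype ι] [LinearOrder ι] [LocallyFiniteOrderBot ι]

theorem exists_sum_Iio_le_lt_sum_Iio_add (x : ι → ℝ) {t : ℝ} (ht₀ : 0 ≤ t) (ht : t < ∑ i, x i) :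
    ∃ i, ∑ j ∈ Iio i, x j ≤ t ∧ t < ∑ j ∈ Iio i, x j + x i := by
  classical
  set S := univ.filter fun i => t < ∑ j ∈ Iic i, x j
  have hS : S.Nonempty := by
    have huniv : (univ : Finset ι).Nonempty :=
      nonempty_of_sum_ne_zero (f := x) (by linarith)
    have htop : Iic (univ.max' huniv) = univ :=
      eq_univ_of_forall fun j => mem_Iic.2 (le_max' _ _ (mem_univ j))
    exact ⟨_, mem_filter.2 ⟨mem_univ _, htop ▸ ht⟩⟩
  set i := S.min' hS
  have hIic : ∑ j ∈ Iic i, x j = ∑ j ∈ Iio i, x j + x i := by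
    rw [Iic_eq_cons_Iio, sum_cons, add_comm]
  refine ⟨i, ?_, hIic ▸ (mem_filter.1 (S.min'_mem hS)).2⟩
  by_contra! hlt
  have hIio : (Iio i).Nonempty := nonempty_of_sum_ne_zero (f := x) (by linarith)
  set p := (Iio i).max' hIio
  have hp : Iic p = Iio i := by
    ext j
    exact ⟨fun hj => mem_Iio.2 ((mem_Iic.1 hj).trans_lt (mem_Iio.1 (max'_mem _ hIio))),
      fun hj => mem_Iic.2 (le_max' _ _ hj)⟩
  have hip : i ≤ p := S.min'_le p (mem_filter.2 ⟨mem_univ p, hp ▸ hlt⟩)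
  exact (mem_Iio.1 (max'_mem _ hIio)).not_ge hip

variable [LocallyFiniteOrderTop ι]

theorem Finset.sum_Iio_add_add_sum_Ioi {M : Type*} [AddCommMonoid M] (x : ι → M) (i : ι) :
    ∑ j ∈ Iio i, x j + x i + ∑ j ∈ Ioi i, x j = ∑ j, x j := by
  classical
  rw [← sum_compl_add_sum {i}, ← Ioi_disjUnion_Iio, sum_disjUnion, sum_singleton]
  abel

theorem exists_two_blocks_sum_lt (x : ι → ℝ) {c : ℝ} (hc : 2 ≤ c) (hsum : ∑ i, x i < c + 1)
    (hx : ∀ i, x i < c) :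
    ∃ A B : Finset ι, Disjoint A B ∧ A ∪ B = univ ∧ ∑ i ∈ A, x i < c ∧ ∑ i ∈ B, x i < c := by
  classical
  suffices ∃ A : Finset ι, ∑ i ∈ A, x i < c ∧ ∑ i ∈ Aᶜ, x i < c by
    obtain ⟨A, hA, hAc⟩ := this
    exact ⟨A, Aᶜ, disjoint_compl_right, union_compl A, hA, hAc⟩
  by_cases hsmall : ∑ i, x i < c
  · exact ⟨∅, by simp; linarith, by simpa using hsmall⟩
  obtain ⟨i, hL, hLx⟩ := exists_sum_Iio_le_lt_sum_Iio_add x (t := ∑ i, x i - c) (by linarith)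
    (by linarith)
  have hT := sum_Iio_add_add_sum_Ioi x i
  by_cases hpre : ∑ j ∈ Iio i, x j + x i < c
  · exact ⟨Ioi i, by linarith, by linarith [sum_compl_add_sum (Ioi i) x]⟩
  · exact ⟨{i}, by simpa using hx i, by linarith [sum_compl_add_sum {i} x, sum_singleton x i]⟩

theorem exists_three_blocks_sum_lt (x : ι → ℝ) {c : ℝ} (hc : 1 ≤ c) (hsum : ∑ i, x i < c + 1)
    (hx : ∀ i, x i < c) :
    ∃ A B C : Finset ι, Disjoint A B ∧ Disjoint A C ∧ Disjoint B C ∧ A ∪ B ∪ C = univ ∧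
      ∑ i ∈ A, x i < c ∧ ∑ i ∈ B, x i < c ∧ ∑ i ∈ C, x i < c := by
  classical
  by_cases hsmall : ∑ i, x i < c
  · exact ⟨∅, ∅, univ, by simp, by simp, by simp, by simp, by simp; linarith, by simp; linarith,
      hsmall⟩
  obtain ⟨i, hL, hLx⟩ := exists_sum_Iio_le_lt_sum_Iio_add x (t := ∑ i, x i - c) (by linarith)
    (by linarith)
  have hT := sum_Iio_add_add_sum_Ioi x i
  refine ⟨Iio i, {i}, Ioi i, by simp, (disjoint_Ioi_Iio i).symm, by simp, ?_, by linarith,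
    by simpa using hx i, by linarith⟩
  ext j
  simpa using le_or_gt j i

theorem block_partition_lemma_general (r k : ℕ) (x : Fin r → ℝ) (hsum : ∑ i, x i < (k : ℝ) + 1) :
    (2 ≤ k →
      (∃ i, (k : ℝ) ≤ x i) ∨
      ∃ A B : Finset (Fin r), Disjoint A B ∧ A ∪ B = Finset.univ ∧
        ∑ i ∈ A, x i < (k : ℝ) ∧ ∑ i ∈ B, x i < (k : ℝ)) ∧
    (k = 1 →
      (∃ i, (1 : ℝ) ≤ x i) ∨
      ∃ A B C : Finset (Fin r), Disjoint A B ∧ Disjoint A C ∧ Disjoint B C ∧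
        A ∪ B ∪ C = Finset.univ ∧
        ∑ i ∈ A, x i < 1 ∧ ∑ i ∈ B, x i < 1 ∧ ∑ i ∈ C, x i < 1) := by
  refine ⟨fun hk => or_iff_not_imp_left.2 fun hbig => ?_,
    fun hk => or_iff_not_imp_left.2 fun hbig => ?_⟩
  · simp only [not_exists, not_le] at hbig
    exact exists_two_blocks_sum_lt x (by exact_mod_cast hk) hsum hbig
  · subst hk
    simp only [not_exists, not_le] at hbig
    rw [Nat.cast_one] at hsum
    exact exists_three_blocks_sum_lt x le_rfl hsum hbig

/-- A combinatorial lemma about splitting positive reals with sum < k+1 into blocks. -/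
theorem block_partition_lemma (r k : ℕ) (hk : 1 ≤ k) (x : Fin r → ℝ)
    (hx : ∀ i, 0 < x i) (hsum : ∑ i, x i < (k : ℝ) + 1) :
    (2 ≤ k →
      (∃ i, (k : ℝ) ≤ x i) ∨
      ∃ A B : Finset (Fin r), Disjoint A B ∧ A ∪ B = Finset.univ ∧
        ∑ i ∈ A, x i < (k : ℝ) ∧ ∑ i ∈ B, x i < (k : ℝ)) ∧
    (k = 1 →
      (∃ i, (1 : ℝ) ≤ x i) ∨
      ∃ A B C : Finset (Fin r), Disjoint A B ∧ Disjoint A C ∧ Disjoint B C ∧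
        A ∪ B ∪ C = Finset.univ ∧
        ∑ i ∈ A, x i < 1 ∧ ∑ i ∈ B, x i < 1 ∧ ∑ i ∈ C, x i < 1) :=
  block_partition_lemma_general r k x hsum
end

section
/- Let α be a real number with 0 < α ≤ 1/2, let i, j, k be natural numbers with i + j = k + 2, and let a and b be positive integers. If δ(a) < i·α, δ(b) < j·α, and δ(ab) ≥ k·α, then ‖ab‖ = ‖a‖ + ‖b‖. -/
open Real

/-!
Since `log₃` is additive, `δ(ab) = δ(a) + δ(b) - (‖a‖ + ‖b‖ - ‖ab‖)`, and `‖ab‖ ≤ ‖a‖ + ‖b‖`.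
So if the product were written strictly more cheaply, then
`δ(ab) ≤ δ(a) + δ(b) - 1 < (i + j)α - 1 = kα + (2α - 1) ≤ kα`.
-/

theorem writes_self : ∀ {n : ℕ}, 0 < n → Writes n n
  | 1, _ => .one
  | m + 2, _ => Writes.add (a := m + 1) (writes_self m.succ_pos) .one

theorem cpx_mul_le {a b : ℕ} (ha : 0 < a) (hb : 0 < b) : cpx (a * b) ≤ cpx a + cpx b :=
  Nat.sInf_le (.mul (writes_cpx ha) (writes_cpx hb))

theorem defect_mul {a b : ℕ} (ha : 0 < a) (hb : 0 < b) :
    defect (a * b) = defect a + defect b - ((cpx a + cpx b : ℕ) - cpx (a * b) : ℝ) := by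
  have hlog : logb 3 ((a * b : ℕ) : ℝ) = logb 3 a + logb 3 b := by
    push_cast
    exact logb_mul (by positivity) (by positivity)
  simp only [defect, hlog]
  push_cast
  ring

theorem cpx_mul_eq_of_defect_add_sub_one_lt {a b : ℕ} (ha : 0 < a) (hb : 0 < b)
    (h : defect a + defect b - 1 < defect (a * b)) : cpx (a * b) = cpx a + cpx b := by
  refine (cpx_mul_le ha hb).antisymm (Nat.le_of_lt_succ ?_)
  rw [defect_mul ha hb] at h
  exact_mod_cast (show ((cpx a + cpx b : ℕ) : ℝ) < cpx (a * b) + 1 by linarith)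

theorem mult_pruning_lemma_general (α : ℝ) (hα : α ≤ 1 / 2)
    (i j k : ℕ) (hijk : i + j = k + 2) (a b : ℕ) (ha : 0 < a) (hb : 0 < b)
    (hda : defect a < i * α) (hdb : defect b < j * α)
    (hdab : k * α ≤ defect (a * b)) :
    cpx (a * b) = cpx a + cpx b := by
  have hk : (i : ℝ) + j = k + 2 := by exact_mod_cast hijk
  have hij : (i + j : ℝ) * α - 1 ≤ k * α := by rw [hk]; linarith
  exact cpx_mul_eq_of_defect_add_sub_one_lt ha hb (by linarith)

/-- Multiplicative pruning lemma. -/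
theorem mult_pruning_lemma (α : ℝ) (hα0 : 0 < α) (hα : α ≤ 1 / 2)
    (i j k : ℕ) (hijk : i + j = k + 2) (a b : ℕ) (ha : 0 < a) (hb : 0 < b)
    (hda : defect a < i * α) (hdb : defect b < j * α)
    (hdab : k * α ≤ defect (a * b)) :
    cpx (a * b) = cpx a + cpx b :=
  mult_pruning_lemma_general α hα i j k hijk a b ha hb hda hdb hdab
end

section
/- For every integer a with 0 ≤ a ≤ 21 and every integer k ≥ 0 with a + k ≥ 1, one has ‖2^a · 3^k‖ = 2a + 3k. -/
open Real

/-!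
A writing of `n` with `m` ones has weight `n³ / 3^m = 3^(-δ)`, where `δ = m - 3 log₃ n` is its
defect; weights multiply under products and never exceed `1`. Writing `2^a 3^k` with
`2a + 3k - 1` ones would give weight `3 (8/9)^a`, which for `a ≤ 21` is at least
`θ = 3 (8/9)^21 = 2^63 / 3^41`. By induction on writings, every writing of weight at least `θ`
writes some `2^b 3^j f` using at least `2b + 3j + e` ones, where `f` is a core of cost `e`:
`1`, `2^a 3^c + 1` with `a ≤ 2` and `2^a 3^c ≥ 4`, or `25`. A sum above `10` of two parts both at
least `2` has weight below `θ` (sums up to `10` are settled by `n³ ≤ 3^m` alone); adding `1` to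
`2^b 3^j f` stays above `θ` only when the result is again of this shape; and a product of two
cores other than `1` stays above `θ` only for `5 · 5 = 25`.
No core other than `1` divides `2^a 3^k`, so the writing would use at least `2a + 3k` ones.
-/

namespace Writes

theorem pos {n m : ℕ} (h : Writes n m) : 0 < n ∧ 0 < m := by
  induction h with
  | one => exact ⟨one_pos, one_pos⟩
  | add _ _ ihu ihv => omega
  | mul _ _ ihu ihv => exact ⟨Nat.mul_pos ihu.1 ihv.1, by omega⟩

theorem pow_s18 {x s : ℕ} (h : Writes x s) (c : ℕ) : Writes (x ^ (c + 1)) ((c + 1) * s) := by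
  induction c with
  | zero => simpa using h
  | succ c ih => simpa [pow_succ, add_mul] using ih.mul h

theorem two_pow_mul_three_pow {a k : ℕ} (h : a + k ≠ 0) :
    Writes (2 ^ a * 3 ^ k) (2 * a + 3 * k) := by
  have two : Writes 2 2 := one.add one
  have three : Writes 3 3 := two.add one
  obtain _ | a := a <;> obtain _ | k := k
  · omega
  · simpa [mul_comm] using three.pow_s18 k
  · simpa [mul_comm] using two.pow_s18 a
  · simpa [mul_comm] using (two.pow_s18 a).mul (three.pow_s18 k)

end Writes

theorem two_le_of_cube_le_three_pow {w k : ℕ} (hw : 2 ≤ w) (hk : w ^ 3 ≤ 3 ^ k) :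
    2 ≤ k := by
  have : 8 ≤ 3 ^ k := le_trans (by simpa using Nat.pow_le_pow_left hw 3) hk
  by_contra! hk
  interval_cases k <;> omega

theorem add_cube_le_three_pow_s18 {u v i j : ℕ} (hu0 : 0 < u) (huv : u ≤ v) (hi : 0 < i)
    (hj : 0 < j) (hu : u ^ 3 ≤ 3 ^ i) (hv : v ^ 3 ≤ 3 ^ j) : (u + v) ^ 3 ≤ 3 ^ (i + j) := by
  rw [pow_add]
  obtain hu1 | hu2 := le_or_gt u 1
  · obtain rfl : u = 1 := by omega
    obtain hv3 | hv2 := le_or_gt 3 v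
    · calc (1 + v) ^ 3 ≤ 3 * v ^ 3 := by
            obtain ⟨t, rfl⟩ := Nat.exists_eq_add_of_le hv3
            nlinarith [Nat.zero_le (t ^ 3), Nat.zero_le (t ^ 2)]
        _ ≤ 3 ^ i * 3 ^ j := Nat.mul_le_mul (Nat.le_self_pow hi.ne' 3) hv
    · have h3i := Nat.le_self_pow hi.ne' 3
      have h3j := Nat.le_self_pow hj.ne' 3
      interval_cases v
      · nlinarith
      · have h9 := Nat.pow_le_pow_right (show 0 < 3 by norm_num)
          (two_le_of_cube_le_three_pow le_rfl hv)
        nlinarith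
  · have h9 :=
      Nat.pow_le_pow_right (show 0 < 3 by norm_num) (two_le_of_cube_le_three_pow hu2 hu)
    calc (u + v) ^ 3 ≤ (2 * v) ^ 3 := Nat.pow_le_pow_left (by omega) 3
      _ = 8 * v ^ 3 := by ring
      _ ≤ 3 ^ i * 3 ^ j := Nat.mul_le_mul (le_trans (by norm_num) h9) hv

theorem Writes.cube_le {n m : ℕ} (h : Writes n m) : n ^ 3 ≤ 3 ^ m := by
  induction h with
  | one => norm_num
  | @add u v i j hu hv ihu ihv =>
    rcases le_total u v with huv | hvu
    · exact add_cube_le_three_pow_s18 hu.pos.1 huv hu.pos.2 hv.pos.2 ihu ihv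
    · rw [add_comm u, add_comm i]
      exact add_cube_le_three_pow_s18 hv.pos.1 hvu hv.pos.2 hu.pos.2 ihv ihu
  | mul _ _ ihu ihv => rw [mul_pow, pow_add]; exact Nat.mul_le_mul ihu ihv

def weight (n m : ℕ) : ℚ := (n : ℚ) ^ 3 / 3 ^ m

def threshold : ℚ := 2 ^ 63 / 3 ^ 41

theorem weight_nonneg (n m : ℕ) : 0 ≤ weight n m := by
  unfold weight; positivity

theorem weight_antitone {n m m' : ℕ} (h : m ≤ m') : weight n m' ≤ weight n m :=
  div_le_div_of_nonneg_left (by positivity) (by positivity) (pow_le_pow_right₀ (by norm_num) h)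

theorem weight_mul (u v i j : ℕ) : weight (u * v) (i + j) = weight u i * weight v j := by
  simp only [weight, Nat.cast_mul, mul_pow, pow_add, mul_div_mul_comm]

theorem weight_add {u v : ℕ} (hu : u ≠ 0) (hv : v ≠ 0) (i j : ℕ) :
    weight (u + v) (i + j) = weight u i * weight v j * (1 / u + 1 / v) ^ 3 := by
  simp only [weight, Nat.cast_add, pow_add]
  field_simp
  ring

theorem weight_add_one {v : ℕ} (hv : v ≠ 0) (j : ℕ) :
    weight (v + 1) (j + 1) = weight v j * (1 + 1 / v) ^ 3 / 3 := by
  simp only [weight, Nat.cast_add, Nat.cast_one, pow_succ]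
  field_simp

theorem weight_add_one_le {v v₀ j : ℕ} (h₀ : 0 < v₀) (hv : v₀ ≤ v) :
    weight (v + 1) (j + 1) ≤ weight v j * (1 + 1 / v₀) ^ 3 / 3 := by
  rw [weight_add_one (by omega)]
  have := weight_nonneg v j
  gcongr

theorem weight_two_pow_mul_three_pow (b c : ℕ) :
    weight (2 ^ b * 3 ^ c) (2 * b + 3 * c) = (8 / 9) ^ b := by
  have num : ((2 : ℚ) ^ b * 3 ^ c) ^ 3 = 8 ^ b * 27 ^ c := by
    rw [mul_pow, ← pow_mul, ← pow_mul, mul_comm b, mul_comm c, pow_mul, pow_mul]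
    norm_num
  have den : (3 : ℚ) ^ (2 * b + 3 * c) = 9 ^ b * 27 ^ c := by
    rw [pow_add, pow_mul, pow_mul]
    norm_num
  rw [weight, Nat.cast_mul, Nat.cast_pow, Nat.cast_pow, Nat.cast_ofNat, Nat.cast_ofNat, num, den,
    div_pow]
  field_simp

theorem weight_two_pow_mul_three_pow_mul_le {b j f e m : ℕ} (hm : 2 * b + 3 * j + e ≤ m) :
    weight (2 ^ b * 3 ^ j * f) m ≤ (8 / 9) ^ b * weight f e := by
  calc weight (2 ^ b * 3 ^ j * f) m ≤ weight (2 ^ b * 3 ^ j * f) (2 * b + 3 * j + e) :=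
        weight_antitone hm
    _ = (8 / 9) ^ b * weight f e := by rw [weight_mul, weight_two_pow_mul_three_pow]

theorem weight_le_of_two_pow_mul_three_pow {b c m : ℕ} (hm : 2 * b + 3 * c ≤ m) :
    weight (2 ^ b * 3 ^ c) m ≤ (8 / 9) ^ b :=
  (weight_antitone hm).trans (weight_two_pow_mul_three_pow b c).le

theorem weight_add_one_lt_threshold {v v₀ j m : ℕ} {B : ℚ} (h₀ : 0 < v₀) (hv : v₀ ≤ v)
    (hm : j + 1 ≤ m) (hB : weight v j ≤ B) (hlt : B * (1 + 1 / v₀) ^ 3 / 3 < threshold) :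
    weight (v + 1) m < threshold := by
  have : 0 ≤ (1 + 1 / (v₀ : ℚ)) ^ 3 / 3 := by positivity
  calc weight (v + 1) m ≤ weight v j * (1 + 1 / v₀) ^ 3 / 3 :=
        (weight_antitone hm).trans (weight_add_one_le h₀ hv)
    _ ≤ B * (1 + 1 / v₀) ^ 3 / 3 := by gcongr
    _ < threshold := hlt

theorem weight_add_one_le_weight {v j m : ℕ} (hv : 3 ≤ v) (hm : j + 1 ≤ m) :
    weight (v + 1) m ≤ weight v j := by
  have := weight_nonneg v j
  calc weight (v + 1) m ≤ weight (v + 1) (j + 1) := weight_antitone hm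
    _ ≤ weight v j * (1 + 1 / 3) ^ 3 / 3 := weight_add_one_le (by norm_num) hv
    _ ≤ weight v j := by linarith

theorem Writes.weight_le_one {n m : ℕ} (h : Writes n m) : weight n m ≤ 1 :=
  div_le_one_of_le₀ (by exact_mod_cast h.cube_le) (by positivity)

theorem weight_add_lt_threshold {u v i j : ℕ} (hu : 2 ≤ u) (hv : 2 ≤ v) (huv : 11 ≤ u + v)
    (hwu : weight u i ≤ 1) (hwv : weight v j ≤ 1) : weight (u + v) (i + j) < threshold := by
  have hprod : 18 * (u + v) ≤ 11 * (u * v) := by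
    rcases le_total u v with h | h <;> nlinarith
  have hsum : 1 / (u : ℚ) + 1 / v ≤ 11 / 18 := by
    rw [div_add_div _ _ (by positivity) (by positivity),
      div_le_div_iff₀ (by positivity) (by norm_num)]
    exact_mod_cast (by linarith : (1 * v + u * 1) * 18 ≤ 11 * (u * v))
  have := weight_nonneg u i
  have := weight_nonneg v j
  rw [weight_add (by omega) (by omega)]
  calc weight u i * weight v j * (1 / u + 1 / v) ^ 3 ≤ 1 * 1 * (11 / 18) ^ 3 := by gcongr
    _ < threshold := by norm_num [threshold]

theorem threshold_le_weight_of_mul {u v i j : ℕ} (hu : Writes u i) (hv : Writes v j)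
    (hθ : threshold ≤ weight (u * v) (i + j)) :
    threshold ≤ weight u i ∧ threshold ≤ weight v j := by
  rw [weight_mul] at hθ
  exact ⟨hθ.trans (mul_le_of_le_one_right (weight_nonneg u i) hv.weight_le_one),
    hθ.trans (mul_le_of_le_one_left (weight_nonneg v j) hu.weight_le_one)⟩

inductive Core : ℕ → ℕ → Prop
  | one : Core 1 0
  | succ {a c : ℕ} : a ≤ 2 → 2 ≤ a + c → Core (2 ^ a * 3 ^ c + 1) (2 * a + 3 * c + 1)
  | twentyFive : Core 25 10

namespace Core

theorem weight_le {f e : ℕ} (h : Core f e) (hf : f ≠ 1) :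
    (f = 5 ∧ e = 5) ∨ weight f e ≤ 343 / 729 := by
  cases h with
  | one => contradiction
  | twentyFive => right; norm_num [weight]
  | @succ a c ha hac =>
    have bound {x₀ : ℕ} (h₀ : 0 < x₀) (hx : x₀ ≤ 2 ^ a * 3 ^ c) :
        weight (2 ^ a * 3 ^ c + 1) (2 * a + 3 * c + 1) ≤
          (8 / 9) ^ a * (1 + 1 / x₀) ^ 3 / 3 := by
      rw [← weight_two_pow_mul_three_pow]
      exact weight_add_one_le h₀ hx
    interval_cases a
    · refine .inr ((bound (x₀ := 9) (by norm_num) ?_).trans (by norm_num))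
      simpa using Nat.pow_le_pow_right (show 0 < 3 by norm_num) (show 2 ≤ c by omega)
    · refine .inr ((bound (x₀ := 6) (by norm_num) ?_).trans (by norm_num))
      have := Nat.le_self_pow (show c ≠ 0 by omega) 3
      omega
    · obtain rfl | hc := Nat.eq_zero_or_pos c
      · exact .inl (by norm_num)
      · refine .inr ((bound (x₀ := 12) (by norm_num) ?_).trans (by norm_num))
        have := Nat.le_self_pow hc.ne' 3
        omega

theorem weight_le_of_ne_one {f e : ℕ} (h : Core f e) (hf : f ≠ 1) :
    weight f e ≤ 125 / 243 := by
  obtain ⟨rfl, rfl⟩ | hw := h.weight_le hf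
  · norm_num [weight]
  · linarith

end Core

def CoreForm (n m : ℕ) : Prop :=
  ∃ b j f e, Core f e ∧ n = 2 ^ b * 3 ^ j * f ∧ 2 * b + 3 * j + e ≤ m

namespace CoreForm

theorem of_core {f e m : ℕ} (h : Core f e) (hm : e ≤ m) : CoreForm f m :=
  ⟨0, 0, f, e, h, by simp, by omega⟩

theorem of_two_pow_mul_three_pow {b j m : ℕ} (hm : 2 * b + 3 * j ≤ m) :
    CoreForm (2 ^ b * 3 ^ j) m :=
  ⟨b, j, 1, 0, .one, by simp, by omega⟩

theorem of_le_ten {n m : ℕ} (hn : 0 < n) (h10 : n ≤ 10) (hcube : n ^ 3 ≤ 3 ^ m) :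
    CoreForm n m := by
  have cost {c : ℕ} (hc : 3 ^ c < n ^ 3) : c < m :=
    (Nat.pow_lt_pow_iff_right (by norm_num)).1 (hc.trans_le hcube)
  interval_cases n
  · exact of_two_pow_mul_three_pow (b := 0) (j := 0) (by omega)
  · exact of_two_pow_mul_three_pow (b := 1) (j := 0) (cost (c := 1) (by norm_num))
  · exact of_two_pow_mul_three_pow (b := 0) (j := 1) (cost (c := 2) (by norm_num))
  · exact of_two_pow_mul_three_pow (b := 2) (j := 0) (cost (c := 3) (by norm_num))
  · exact of_core (Core.succ (a := 2) (c := 0) (by norm_num) (by norm_num))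
      (cost (c := 4) (by norm_num))
  · exact of_two_pow_mul_three_pow (b := 1) (j := 1) (cost (c := 4) (by norm_num))
  · exact of_core (Core.succ (a := 1) (c := 1) (by norm_num) (by norm_num))
      (cost (c := 5) (by norm_num))
  · exact of_two_pow_mul_three_pow (b := 3) (j := 0) (cost (c := 5) (by norm_num))
  · exact of_two_pow_mul_three_pow (b := 0) (j := 2) (cost (c := 5) (by norm_num))
  · exact of_core (Core.succ (a := 0) (c := 2) (by norm_num) (by norm_num))
      (cost (c := 6) (by norm_num))

theorem two_pow_mul_three_pow_add_one {b c j m : ℕ} (h10 : 10 ≤ 2 ^ b * 3 ^ c)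
    (hcost : 2 * b + 3 * c ≤ j) (hm : j + 1 ≤ m)
    (hθ : threshold ≤ weight (2 ^ b * 3 ^ c + 1) m) : CoreForm (2 ^ b * 3 ^ c + 1) m := by
  have hw := weight_le_of_two_pow_mul_three_pow hcost
  obtain hb | rfl | hb : b ≤ 2 ∨ b = 3 ∨ 4 ≤ b := by omega
  · refine of_core (.succ hb ?_) (by omega)
    by_contra! h
    have : c ≤ 1 := by omega
    interval_cases b <;> interval_cases c <;> omega
  · obtain rfl | rfl | hc : c = 0 ∨ c = 1 ∨ 2 ≤ c := by omega
    · norm_num at h10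
    · exact of_core .twentyFive (by omega)
    · have h72 : 72 ≤ 2 ^ 3 * 3 ^ c := by
        simpa using Nat.mul_le_mul_left 8 (Nat.pow_le_pow_right (show 0 < 3 by norm_num) hc)
      exact absurd hθ (not_le.2 (weight_add_one_lt_threshold (by norm_num) h72 hm hw
        (by norm_num [threshold])))
  · have h16 : 16 ≤ 2 ^ b * 3 ^ c := by
      simpa using Nat.mul_le_mul (Nat.pow_le_pow_right (show 0 < 2 by norm_num) hb)
        (Nat.one_le_pow c 3 (by norm_num))
    exact absurd hθ (not_le.2 (weight_add_one_lt_threshold (by norm_num) h16 hm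
      (hw.trans (pow_le_pow_of_le_one (by norm_num) (by norm_num) hb)) (by norm_num [threshold])))

theorem add_one {v j m : ℕ} (hv : CoreForm v j) (h10 : 10 ≤ v) (hm : j + 1 ≤ m)
    (hθ : threshold ≤ weight (v + 1) m) : CoreForm (v + 1) m := by
  obtain ⟨b, c, f, e, hf, rfl, hcost⟩ := hv
  by_cases hf1 : f = 1
  · subst hf1
    rw [mul_one] at h10 hθ ⊢
    exact two_pow_mul_three_pow_add_one h10 (by omega) hm hθ
  have hw : weight (2 ^ b * 3 ^ c * f) j ≤ 125 / 243 :=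
    (weight_two_pow_mul_three_pow_mul_le hcost).trans
      ((mul_le_of_le_one_left (weight_nonneg f e) (pow_le_one₀ (by norm_num) (by norm_num))).trans
        (hf.weight_le_of_ne_one hf1))
  exact absurd hθ (not_le.2 (weight_add_one_lt_threshold (by norm_num) h10 hm hw
    (by norm_num [threshold])))

theorem mul {u v i j : ℕ} (hu : CoreForm u i) (hv : CoreForm v j)
    (hθ : threshold ≤ weight (u * v) (i + j)) : CoreForm (u * v) (i + j) := by
  obtain ⟨b₁, j₁, f₁, e₁, hf₁, rfl, hc₁⟩ := hu
  obtain ⟨b₂, j₂, f₂, e₂, hf₂, rfl, hc₂⟩ := hv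
  by_cases h₁ : f₁ = 1
  · subst h₁
    exact ⟨b₁ + b₂, j₁ + j₂, f₂, e₂, hf₂, by ring, by omega⟩
  by_cases h₂ : f₂ = 1
  · subst h₂
    exact ⟨b₁ + b₂, j₁ + j₂, f₁, e₁, hf₁, by ring, by omega⟩
  have hw : weight (2 ^ b₁ * 3 ^ j₁ * f₁ * (2 ^ b₂ * 3 ^ j₂ * f₂)) (i + j) ≤
      (8 / 9) ^ (b₁ + b₂) * (weight f₁ e₁ * weight f₂ e₂) := by
    rw [weight_mul, pow_add, mul_mul_mul_comm]
    exact mul_le_mul (weight_two_pow_mul_three_pow_mul_le hc₁)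
      (weight_two_pow_mul_three_pow_mul_le hc₂) (weight_nonneg _ _)
      (mul_nonneg (by positivity) (weight_nonneg _ _))
  have w₁ := hf₁.weight_le_of_ne_one h₁
  have w₂ := hf₂.weight_le_of_ne_one h₂
  have := weight_nonneg f₁ e₁
  have := weight_nonneg f₂ e₂
  rcases hf₁.weight_le h₁ with ⟨hf₁5, he₁5⟩ | w₁' <;>
    rcases hf₂.weight_le h₂ with ⟨hf₂5, he₂5⟩ | w₂'
  · subst hf₁5 he₁5 hf₂5 he₂5
    obtain hb | hb := Nat.eq_zero_or_pos (b₁ + b₂)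
    · obtain ⟨rfl, rfl⟩ : b₁ = 0 ∧ b₂ = 0 := by omega
      exact ⟨0, j₁ + j₂, 25, 10, .twentyFive, by ring, by omega⟩
    · refine absurd (hθ.trans hw) (not_le.2 ?_)
      calc (8 / 9) ^ (b₁ + b₂) * (weight 5 5 * weight 5 5)
          ≤ 8 / 9 * (weight 5 5 * weight 5 5) := by
            gcongr; exact pow_le_of_le_one (by norm_num) (by norm_num) hb.ne'
        _ < threshold := by norm_num [weight, threshold]
  all_goals
    refine absurd (hθ.trans hw) (not_le.2 ?_)
    have : weight f₁ e₁ * weight f₂ e₂ ≤ 125 / 243 * (343 / 729) := by nlinarith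
    calc (8 / 9) ^ (b₁ + b₂) * (weight f₁ e₁ * weight f₂ e₂)
        ≤ 1 * (125 / 243 * (343 / 729)) := by
          gcongr; exact pow_le_one₀ (by norm_num) (by norm_num)
      _ < threshold := by norm_num [threshold]

end CoreForm

theorem Writes.coreForm {n m : ℕ} (h : Writes n m) (hθ : threshold ≤ weight n m) :
    CoreForm n m := by
  induction h with
  | one => exact .of_core .one (Nat.zero_le 1)
  | @add u v i j hu hv ihu ihv =>
    have ⟨hu0, hi⟩ := hu.pos
    have ⟨hv0, hj⟩ := hv.pos
    by_cases h10 : u + v ≤ 10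
    · exact .of_le_ten (by omega) h10 (hu.add hv).cube_le
    by_cases hu1 : u = 1
    · subst hu1
      rw [add_comm 1 v, add_comm i j] at hθ ⊢
      exact (ihv (hθ.trans (weight_add_one_le_weight (by omega) (by omega)))).add_one
        (by omega) (by omega) hθ
    by_cases hv1 : v = 1
    · subst hv1
      exact (ihu (hθ.trans (weight_add_one_le_weight (by omega) (by omega)))).add_one
        (by omega) (by omega) hθ
    exact absurd hθ (not_le.2 (weight_add_lt_threshold (by omega) (by omega) (by omega)
      hu.weight_le_one hv.weight_le_one))
  | @mul u v i j hu hv ihu ihv =>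
    obtain ⟨hθu, hθv⟩ := threshold_le_weight_of_mul hu hv hθ
    exact (ihu hθu).mul (ihv hθv) hθ

theorem two_pow_mul_three_pow_inj {a k b j : ℕ} (h : 2 ^ a * 3 ^ k = 2 ^ b * 3 ^ j) :
    a = b ∧ k = j := by
  have h2 := congrArg (fun n => n.factorization 2) h
  have h3 := congrArg (fun n => n.factorization 3) h
  simp [Nat.factorization_mul, Nat.factorization_pow, Nat.prime_two.factorization,
    Nat.prime_three.factorization] at h2 h3
  exact ⟨h2, h3⟩

theorem three_pow_mod_eight (c : ℕ) : 3 ^ c % 8 = 1 ∨ 3 ^ c % 8 = 3 := by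
  induction c with
  | zero => simp
  | succ c ih => rw [pow_succ]; omega

theorem three_pow_add_one_ne_two_pow {c : ℕ} (hc : 2 ≤ c) (x : ℕ) : 3 ^ c + 1 ≠ 2 ^ x := by
  intro h
  have h9 : 9 ≤ 3 ^ c := by simpa using Nat.pow_le_pow_right (show 0 < 3 by norm_num) hc
  have hx : 3 ≤ x := by
    by_contra! hx
    have := Nat.pow_le_pow_right (show 0 < 2 by norm_num) (show x ≤ 2 by omega)
    omega
  have : 8 ∣ 2 ^ x := by simpa using Nat.pow_dvd_pow 2 hx
  have := three_pow_mod_eight c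
  omega

theorem eq_one_of_dvd_two_pow_mul_three_pow {f a k : ℕ} (hd : f ∣ 2 ^ a * 3 ^ k)
    (h2 : ¬ 2 ∣ f) (h3 : ¬ 3 ∣ f) : f = 1 := by
  refine Nat.Coprime.eq_one_of_dvd (Nat.Coprime.mul_right ?_ ?_) hd
  · exact ((Nat.Prime.coprime_iff_not_dvd Nat.prime_two).2 h2).symm.pow_right a
  · exact ((Nat.Prime.coprime_iff_not_dvd Nat.prime_three).2 h3).symm.pow_right k

theorem Core.eq_one_of_dvd {f e a k : ℕ} (h : Core f e) (hd : f ∣ 2 ^ a * 3 ^ k) : f = 1 := by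
  cases h with
  | one => rfl
  | twentyFive => exact eq_one_of_dvd_two_pow_mul_three_pow hd (by norm_num) (by norm_num)
  | @succ b c hb hbc =>
    exfalso
    obtain rfl | hc := Nat.eq_zero_or_pos c
    · obtain rfl : b = 2 := by omega
      exact absurd (eq_one_of_dvd_two_pow_mul_three_pow hd (by norm_num) (by norm_num))
        (by norm_num)
    have h3 : ¬ 3 ∣ 2 ^ b * 3 ^ c + 1 := by
      have : 3 ∣ 2 ^ b * 3 ^ c := Dvd.dvd.mul_left (dvd_pow_self 3 hc.ne') _
      omega
    obtain rfl | hb := Nat.eq_zero_or_pos b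
    · have hd2 : 3 ^ c + 1 ∣ 2 ^ a :=
        (Nat.Coprime.pow_right k ((Nat.Prime.coprime_iff_not_dvd Nat.prime_three).2
          (by simpa using h3)).symm).dvd_of_dvd_mul_right (by simpa using hd)
      obtain ⟨x, -, hx⟩ := (Nat.dvd_prime_pow Nat.prime_two).1 hd2
      exact three_pow_add_one_ne_two_pow (by omega) x hx
    · have h2 : ¬ 2 ∣ 2 ^ b * 3 ^ c + 1 := by
        have : 2 ∣ 2 ^ b * 3 ^ c := Dvd.dvd.mul_right (dvd_pow_self 2 hb.ne') _
        omega
      have := eq_one_of_dvd_two_pow_mul_three_pow hd h2 h3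
      have : 0 < 2 ^ b * 3 ^ c := by positivity
      omega

theorem CoreForm.le_of_two_pow_mul_three_pow {a k m : ℕ} (h : CoreForm (2 ^ a * 3 ^ k) m) :
    2 * a + 3 * k ≤ m := by
  obtain ⟨b, j, f, e, hf, he, hm⟩ := h
  obtain rfl := hf.eq_one_of_dvd (Dvd.intro_left _ he.symm)
  obtain ⟨rfl, rfl⟩ := two_pow_mul_three_pow_inj (by simpa using he)
  omega

theorem threshold_le_weight_two_pow_mul_three_pow {a k m : ℕ} (ha : a ≤ 21)
    (hm : m < 2 * a + 3 * k) : threshold ≤ weight (2 ^ a * 3 ^ k) m := by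
  calc threshold = 3 * (8 / 9) ^ 21 := by norm_num [threshold]
    _ ≤ 3 * (8 / 9) ^ a :=
      mul_le_mul_of_nonneg_left (pow_le_pow_of_le_one (by norm_num) (by norm_num) ha) (by norm_num)
    _ = 3 * weight (2 ^ a * 3 ^ k) (2 * a + 3 * k) := by rw [weight_two_pow_mul_three_pow]
    _ ≤ 3 * weight (2 ^ a * 3 ^ k) (m + 1) :=
      mul_le_mul_of_nonneg_left (weight_antitone hm) (by norm_num)
    _ = weight (2 ^ a * 3 ^ k) m := by rw [weight, weight]; field_simp; ring

/-- For 0 ≤ a ≤ 21 and k ≥ 0 with a + k ≥ 1, ‖2^a·3^k‖ = 2a + 3k. -/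
theorem complexity_two_pow_le_21 (a k : ℕ) (ha : a ≤ 21) (hak : 1 ≤ a + k) :
    cpx (2 ^ a * 3 ^ k) = 2 * a + 3 * k := by
  have hw := Writes.two_pow_mul_three_pow (a := a) (k := k) (by omega)
  refine le_antisymm (Nat.sInf_le hw) (le_csInf ⟨_, hw⟩ fun m hm => ?_)
  by_contra! hlt
  have hθ := threshold_le_weight_two_pow_mul_three_pow ha hlt
  exact absurd (hm.coreForm hθ).le_of_two_pow_mul_three_pow (not_le.2 hlt)
end
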